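/- Let X ∈ (R^d)^N be generic, let I ⊆ {1,...,N} with 1 ≤ #I < d, and suppose there exists j ∈ {1,...,N} \ I with ⟨w_I, x^{(j)}⟩ = t_I. Then for J = I ∪ {j} one has t_J = t_I and w_J = w_I. -/

import Mathlib

open Real Set
open scoped RealInnerProductSpace

noncomputable section

/-- A point set is generic if every subfamily of at most `d` of its points is linearly
independent in `ℝ^d`. -/
def Generic {d N : ℕ} (X : Fin N → EuclideanSpace ℝ (Fin d)) : Prop :=
  ∀ I : Finset (Fin N), I.card ≤ d → LinearIndependent ℝ (fun i : I => X i)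

/-- The Gram matrix `X_I^T X_I` of the subfamily of points indexed by `I`. -/
def Gram {d N : ℕ} (X : Fin N → EuclideanSpace ℝ (Fin d)) (I : Finset (Fin N)) :
    Matrix I I ℝ :=
  fun i j => ⟪X i, X j⟫

/-- `t_I = (1^T (X_I^T X_I)^{-1} 1)^{-1/2}`. -/
def tI {d N : ℕ} (X : Fin N → EuclideanSpace ℝ (Fin d)) (I : Finset (Fin N)) : ℝ :=
  (Real.sqrt (∑ i : I, ∑ j : I, (Gram X I)⁻¹ i j))⁻¹

/-- `w_I = t_I X_I (X_I^T X_I)^{-1} 1`. -/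
def wI {d N : ℕ} (X : Fin N → EuclideanSpace ℝ (Fin d)) (I : Finset (Fin N)) :
    EuclideanSpace ℝ (Fin d) :=
  tI X I • ∑ i : I, (∑ j : I, (Gram X I)⁻¹ i j) • X i

/-!
Let `c = (X_I^T X_I)^{-1} 1`, extended by zero to all indices. As `t_I > 0`, the hypothesis
`⟪w_I, x^{(j)}⟫ = t_I` says that `⟪∑ c_i x^{(i)}, x^{(j)}⟫ = 1`, so `c` also solves
the Gram system `X_J^T X_J c = 1` of `J = I ∪ {j}`. By genericity that system has a unique
solution, hence `(X_J^T X_J)^{-1} 1 = c`, and `t_J`, `w_J` are built from the same coefficients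
as `t_I`, `w_I`.
-/

namespace Gram

open Matrix

variable {d N : ℕ} (X : Fin N → EuclideanSpace ℝ (Fin d)) (I : Finset (Fin N))

def invMulVecOne : Fin N → ℝ :=
  fun n => if h : n ∈ I then ∑ m : I, (Gram X I)⁻¹ ⟨n, h⟩ m else 0

variable {X I}

theorem eq_gram : Gram X I = gram ℝ (fun i : I => X i) := rfl

theorem isUnit_det (h : LinearIndependent ℝ fun i : I => X i) : IsUnit (Gram X I).det :=
  (eq_gram ▸ posDef_gram_of_linearIndependent h).det_pos.ne'.isUnit

theorem invMulVecOne_of_notMem {n : Fin N} (hn : n ∉ I) : invMulVecOne X I n = 0 :=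
  dif_neg hn

theorem invMulVecOne_coe (i : I) :
    invMulVecOne X I i = ((Gram X I)⁻¹ *ᵥ 1) i := by
  simp [invMulVecOne, mulVec, dotProduct]

theorem invMulVecOne_eq_iff (hdet : IsUnit (Gram X I).det) {v : Fin N → ℝ}
    (hv : ∀ n ∉ I, v n = 0) :
    invMulVecOne X I = v ↔ ∀ k ∈ I, ∑ n ∈ I, ⟪X k, X n⟫ * v n = 1 := by
  have hrestrict : invMulVecOne X I = v ↔ (Gram X I)⁻¹ *ᵥ 1 = fun i : I => v i := by
    refine ⟨fun h => funext fun i => by rw [← invMulVecOne_coe, h], fun h => funext fun n => ?_⟩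
    by_cases hn : n ∈ I
    · exact (invMulVecOne_coe ⟨n, hn⟩).trans (congrFun h ⟨n, hn⟩)
    · rw [invMulVecOne_of_notMem hn, hv n hn]
  have hsolve : (Gram X I)⁻¹ *ᵥ 1 = (fun i : I => v i) ↔ Gram X I *ᵥ (fun i : I => v i) = 1 := by
    constructor
    · intro h
      rw [← h, mulVec_mulVec, mul_nonsing_inv _ hdet, one_mulVec]
    · intro h
      rw [← h, mulVec_mulVec, nonsing_inv_mul _ hdet, one_mulVec]
  rw [hrestrict, hsolve, funext_iff, Subtype.forall]
  refine forall₂_congr fun k hk => ?_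
  simp only [mulVec, dotProduct, Gram, Pi.one_apply]
  rw [Finset.sum_coe_sort I fun n => ⟪X k, X n⟫ * v n]

theorem tI_eq : tI X I = (√(∑ n ∈ I, invMulVecOne X I n))⁻¹ := by
  rw [tI, ← Finset.sum_coe_sort I]
  simp only [invMulVecOne_coe, mulVec, dotProduct, Pi.one_apply, mul_one]

theorem wI_eq : wI X I = tI X I • ∑ n ∈ I, invMulVecOne X I n • X n := by
  rw [wI, ← Finset.sum_coe_sort I]
  simp only [invMulVecOne_coe, mulVec, dotProduct, Pi.one_apply, mul_one]

theorem inner_wI (y : EuclideanSpace ℝ (Fin d)) :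
    ⟪wI X I, y⟫ = tI X I * ∑ n ∈ I, invMulVecOne X I n * ⟪X n, y⟫ := by
  simp only [wI_eq, real_inner_smul_left, sum_inner]

theorem tI_pos (hI : I.Nonempty) (h : LinearIndependent ℝ fun i : I => X i) : 0 < tI X I := by
  have hone : (1 : I → ℝ) ≠ 0 := by
    obtain ⟨i, hi⟩ := hI
    exact fun h1 => one_ne_zero (congrFun h1 ⟨i, hi⟩)
  have hsum := (eq_gram ▸ posDef_gram_of_linearIndependent h).inv.dotProduct_mulVec_pos hone
  rw [tI]
  refine inv_pos.mpr (Real.sqrt_pos.mpr ?_)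
  simpa [mulVec, dotProduct] using hsum

theorem invMulVecOne_insert {j : Fin N} (hI : IsUnit (Gram X I).det)
    (hJ : IsUnit (Gram X (insert j I)).det) (hj : j ∉ I)
    (hsolve : ∑ n ∈ I, invMulVecOne X I n * ⟪X n, X j⟫ = 1) :
    invMulVecOne X (insert j I) = invMulVecOne X I := by
  refine (invMulVecOne_eq_iff hJ fun n hn => invMulVecOne_of_notMem
    fun h => hn (Finset.mem_insert_of_mem h)).2 fun k hk => ?_
  rw [Finset.sum_insert hj, invMulVecOne_of_notMem hj, mul_zero, zero_add]
  rcases Finset.mem_insert.1 hk with rfl | hk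
  · simpa only [real_inner_comm, mul_comm] using hsolve
  · exact (invMulVecOne_eq_iff hI fun n => invMulVecOne_of_notMem).1 rfl k hk

end Gram

/-- adding an index `j ∉ I` with `⟪w_I, x^{(j)}⟫ = t_I` leaves `t_I` and
`w_I` unchanged. -/
theorem tI_wI_insert {d N : ℕ} (X : Fin N → EuclideanSpace ℝ (Fin d))
    (hgen : Generic X) (I : Finset (Fin N)) (hI : I.Nonempty) (hId : I.card < d)
    (j : Fin N) (hj : j ∉ I) (hjw : ⟪wI X I, X j⟫ = tI X I) :
    tI X (insert j I) = tI X I ∧ wI X (insert j I) = wI X I := by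
  have hliI := hgen I hId.le
  have hliJ := hgen (insert j I) ((Finset.card_insert_le j I).trans hId)
  have hsolve : ∑ n ∈ I, Gram.invMulVecOne X I n * ⟪X n, X j⟫ = 1 :=
    (mul_eq_left₀ (Gram.tI_pos hI hliI).ne').1 (Gram.inner_wI (X j) ▸ hjw)
  have hcoeff := Gram.invMulVecOne_insert (Gram.isUnit_det hliI) (Gram.isUnit_det hliJ) hj hsolve
  have ht : tI X (insert j I) = tI X I := by
    rw [Gram.tI_eq, Gram.tI_eq, hcoeff, Finset.sum_insert hj, Gram.invMulVecOne_of_notMem hj,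
      zero_add]
  refine ⟨ht, ?_⟩
  rw [Gram.wI_eq, Gram.wI_eq, ht, hcoeff, Finset.sum_insert hj, Gram.invMulVecOne_of_notMem hj,
    zero_smul, zero_add]
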